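/- arXiv:1105.0270 — 3 statements merged into one kernel-verified Lean document; each statement's English description precedes it below -/
import Mathlib

section
/- Under Conditions A and Conditions B, with Δ = ε/10, there exists a positive integer t0 such that for every integer t ≥ t0 there is a number N0 = N0(t) > 0 with the following property: for every x ∈ V and every y ∈ 𝒴 with L2(y) ≥ N0, E_{x,y}[L2(Y^t) − L2(y)] ≤ −tΔ. -/
/-! Telescope `L2 (Y^t) - L2 y` into one-step increments. By the Markov property the mean of
the increment at time `s` is at most `E f(X^s) + E h(L2 (Y^s))`. Since the `X`-chain converges to
`π` in total variation uniformly on `V`, `E_x f(X^s) ≤ ∫ f dπ + Δ = -ε + Δ` after a burn-in `T`,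
and a horizon `t ≫ T` absorbs the first `T` steps. The increments have mean absolute value at most
`U`, so `E |L2 (Y^s) - L2 y| ≤ s U`; when `L2 y ≥ 2 r` this makes `E h(L2 (Y^s))` at most
`h r + h 0 · s U / r`, which is small for `r` large (depending on `t`). -/

open MeasureTheory ProbabilityTheory Filter Set
open scoped ENNReal

noncomputable section

/-- First hitting time (at a time `≥ 1`) of a set along a trajectory, valued in `ℝ≥0∞`
(`∞` if the set is never hit). -/
def hitTime {S : Type*} (V : Set S) (ω : ℕ → S) : ℝ≥0∞ :=
  sInf {r : ℝ≥0∞ | ∃ n : ℕ, r = n ∧ 1 ≤ n ∧ ω n ∈ V}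

/-- A time-homogeneous Markov chain, given by the family of its path-space laws
`P z` (the law of the whole trajectory when started at `z`). -/
structure MarkovFamily (S : Type*) [MeasurableSpace S] where
  P : S → Measure (ℕ → S)
  prob : ∀ z, IsProbabilityMeasure (P z)
  meas : Measurable P
  start : ∀ z, P z {ω | ω 0 = z} = 1
  markov : ∀ (z : S) (n : ℕ) (B : Set (ℕ → S)),
      MeasurableSet[MeasurableSpace.comap (fun (ω : ℕ → S) (i : Fin (n+1)) => ω i) inferInstance] B →
      ∀ A : Set (ℕ → S), MeasurableSet A →
        P z (B ∩ {ω | (fun k => ω (n + k)) ∈ A}) = ∫⁻ ω in B, P (ω n) A ∂ P z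

/-- A set `D` is positive recurrent for the chain: the hitting time of `D` is a.s. finite
from every initial state, and its expectation is bounded uniformly over initial states in `D`. -/
def PosRec {S : Type*} [MeasurableSpace S] (F : MarkovFamily S) (D : Set S) : Prop :=
  (∀ z, F.P z {ω | hitTime D ω < ⊤} = 1) ∧
  ∃ C : ℝ≥0∞, C < ⊤ ∧ ∀ z ∈ D, ∫⁻ ω, hitTime D ω ∂ F.P z ≤ C


variable {X Y : Type*} [MeasurableSpace X] [MeasurableSpace Y]

open Classical in
/-- The expected hitting time of `V` (at a time `≥ 1`), as the test function `L1`: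
`L1 x = E_x τ_V` for `x ∉ V` and `L1 x = 0` for `x ∈ V`. -/
def L1fun (XC : MarkovFamily X) (V : Set X) (x : X) : ℝ≥0∞ :=
  if x ∈ V then 0 else ∫⁻ ω, hitTime V ω ∂ XC.P x

/-- Conditions A of the paper for the two-component chain `chain` on `X × Y` whose first
component is the autonomous Markov chain `XC`:  autonomy of the `X`-component (A0), positive
recurrence of the set `V` for the `X`-chain, existence of a stationary distribution `π` for the
`X`-chain with convergence to it in total variation from every point, uniformly over `V`, and
sublinear growth of `E_x L1(X^t)` uniformly over `x ∈ V`. -/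
def CondA (chain : MarkovFamily (X × Y)) (XC : MarkovFamily X) (V : Set X)
    (π : Measure X) : Prop :=
  MeasurableSet V ∧
  -- A0 : the X-component evolves autonomously, with path law `XC.P x` for any initial `y`
  (∀ x y, Measure.map (fun (ω : ℕ → X × Y) (n : ℕ) => (ω n).1) (chain.P (x, y)) = XC.P x) ∧
  -- the hitting time of V is a.s. finite from every initial state
  (∀ x, XC.P x {ω | hitTime V ω < ⊤} = 1) ∧
  -- and its expectation is uniformly bounded on V
  (∃ s0 : ℝ≥0∞, s0 < ⊤ ∧ ∀ x ∈ V, ∫⁻ ω, hitTime V ω ∂ XC.P x ≤ s0) ∧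
  -- π is a stationary distribution of the X-chain
  IsProbabilityMeasure π ∧
  (∀ B : Set X, MeasurableSet B → ∫⁻ x, XC.P x {ω | ω 1 ∈ B} ∂π = π B) ∧
  -- convergence to π in total variation from every initial state
  (∀ x, ∀ ε : ℝ, 0 < ε → ∃ T : ℕ, ∀ t ≥ T, ∀ B : Set X, MeasurableSet B →
      |(XC.P x {ω | ω t ∈ B}).toReal - (π B).toReal| ≤ ε) ∧
  -- uniformly over x ∈ V
  (∀ ε : ℝ, 0 < ε → ∃ T : ℕ, ∀ t ≥ T, ∀ x ∈ V, ∀ B : Set X, MeasurableSet B →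
      |(XC.P x {ω | ω t ∈ B}).toReal - (π B).toReal| ≤ ε) ∧
  -- (1/t) sup_{x ∈ V} E_x L1(X^t) → 0
  (∀ ε : ℝ, 0 < ε → ∃ T : ℕ, ∀ t ≥ T, ∀ x ∈ V,
      ∫⁻ ω, L1fun XC V (ω t) ∂ XC.P x ≤ ENNReal.ofReal (ε * t))

/-- Condition B1 of the paper: the absolute increments of `L2` along the `Y`-component
have expectations bounded by `U`, uniformly in the initial state. -/
def CondB1 (chain : MarkovFamily (X × Y)) (L2 : Y → ℝ) (U : ℝ) : Prop :=
  Measurable L2 ∧ (∀ y, 0 ≤ L2 y) ∧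
  ∀ (x : X) (y : Y),
    ∫⁻ ω, ENNReal.ofReal |L2 (ω 1).2 - L2 y| ∂ chain.P (x, y) ≤ ENNReal.ofReal U

/-- Condition B2 of the paper: a drift inequality
`E_{x,y}[L2(Y^1) - L2(y)] ≤ f x + h (L2 y)` with `h ↓ 0` and `∫ f dπ = -ε < 0`. -/
def CondB2 (chain : MarkovFamily (X × Y)) (π : Measure X) (L2 : Y → ℝ)
    (h : ℝ → ℝ) (f : X → ℝ) (ε : ℝ) : Prop :=
  Antitone h ∧ (∀ r : ℝ, 0 ≤ h r) ∧ Tendsto h atTop (nhds 0) ∧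
  Measurable f ∧ (∃ K : ℝ, ∀ x, |f x| ≤ K) ∧
  0 < ε ∧ (∫ x, f x ∂π = -ε) ∧
  ∀ (x : X) (y : Y),
    ∫ ω, (L2 (ω 1).2 - L2 y) ∂ chain.P (x, y) ≤ f x + h (L2 y)

end

lemma integrable_of_lintegral_ofReal_abs_le {α : Type*} [MeasurableSpace α] {μ : Measure α}
    {g : α → ℝ} (hg : Measurable g) {C : ℝ≥0∞} (hC : C ≠ ⊤)
    (hgC : ∫⁻ a, ENNReal.ofReal |g a| ∂μ ≤ C) : Integrable g μ :=
  ⟨hg.aestronglyMeasurable, (hasFiniteIntegral_iff_norm g).2 (hgC.trans_lt hC.lt_top)⟩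

lemma integral_abs_le_of_lintegral_ofReal_abs_le {α : Type*} [MeasurableSpace α]
    {μ : Measure α} {g : α → ℝ} (hg : Measurable g) {C : ℝ≥0∞} (hC : C ≠ ⊤)
    (hgC : ∫⁻ a, ENNReal.ofReal |g a| ∂μ ≤ C) : ∫ a, |g a| ∂μ ≤ C.toReal := by
  rw [integral_eq_lintegral_of_nonneg_ae (ae_of_all _ fun a => abs_nonneg (g a))
    hg.abs.aestronglyMeasurable]
  exact ENNReal.toReal_mono hC hgC

lemma MeasureTheory.Measure.integral_bind {α β : Type*} [MeasurableSpace α] [MeasurableSpace β]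
    {μ : Measure α} {κ : Kernel α β} {g : β → ℝ} (hg : Integrable g (κ ∘ₘ μ)) :
    ∫ b, g b ∂(κ ∘ₘ μ) = ∫ a, ∫ b, g b ∂κ a ∂μ :=
  Kernel.integral_comp (κ := Kernel.const Unit μ) (a := ()) hg

lemma MeasureTheory.Integrable.integral_bind {α β : Type*} [MeasurableSpace α]
    [MeasurableSpace β] {μ : Measure α} {κ : Kernel α β} {g : β → ℝ}
    (hg : Integrable g (κ ∘ₘ μ)) : Integrable (fun a => ∫ b, g b ∂κ a) μ :=
  Integrable.integral_comp (κ := Kernel.const Unit μ) (a := ()) hg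

lemma abs_integral_sub_integral_le_of_nonneg_of_le {α : Type*} [MeasurableSpace α]
    {μ ν : Measure α} [IsFiniteMeasure μ] [IsFiniteMeasure ν] {f : α → ℝ} (hf : Measurable f)
    {M δ : ℝ} (hM : 0 ≤ M) (hf₀ : ∀ a, 0 ≤ f a) (hfM : ∀ a, f a ≤ M)
    (hμν : ∀ B, MeasurableSet B → |μ.real B - ν.real B| ≤ δ) :
    |∫ a, f a ∂μ - ∫ a, f a ∂ν| ≤ M * δ := by
  have layercake (ρ : Measure α) [IsFiniteMeasure ρ] :
      ∫ a, f a ∂ρ = ∫ t in Ioc 0 M, ρ.real {a | t ≤ f a} :=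
    (Integrable.of_bound hf.aestronglyMeasurable M (ae_of_all _ fun a => by
      rw [Real.norm_eq_abs, abs_of_nonneg (hf₀ a)]; exact hfM a)).integral_eq_integral_Ioc_meas_le
      (ae_of_all _ hf₀) (ae_of_all _ hfM)
  have integrableOn (ρ : Measure α) [IsFiniteMeasure ρ] :
      IntegrableOn (fun t => ρ.real {a | t ≤ f a}) (Ioc 0 M) := by
    have anti : Antitone fun t : ℝ => ρ.real {a | t ≤ f a} :=
      fun s t hst => measureReal_mono fun a (ha : t ≤ f a) => hst.trans ha
    refine Measure.integrableOn_of_bounded (M := ρ.real univ) measure_Ioc_lt_top.ne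
      anti.measurable.aestronglyMeasurable (ae_of_all _ fun t => ?_)
    rw [Real.norm_eq_abs, abs_of_nonneg measureReal_nonneg]
    exact measureReal_mono (subset_univ _)
  rw [layercake μ, layercake ν, ← integral_sub (integrableOn μ) (integrableOn ν),
    ← Real.norm_eq_abs]
  calc _ ≤ δ * volume.real (Ioc 0 M) := norm_setIntegral_le_of_norm_le_const measure_Ioc_lt_top
        fun t _ => hμν _ (measurableSet_le measurable_const hf)
    _ = M * δ := by simp [hM, mul_comm]

lemma abs_integral_sub_integral_le_of_abs_le {α : Type*} [MeasurableSpace α]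
    {μ ν : Measure α} [IsProbabilityMeasure μ] [IsProbabilityMeasure ν] {f : α → ℝ}
    (hf : Measurable f) {K δ : ℝ} (hK : ∀ a, |f a| ≤ K)
    (hμν : ∀ B, MeasurableSet B → |μ.real B - ν.real B| ≤ δ) :
    |∫ a, f a ∂μ - ∫ a, f a ∂ν| ≤ 2 * K * δ := by
  have hK₀ : 0 ≤ K := (abs_nonneg _).trans (hK (nonempty_of_isProbabilityMeasure μ).some)
  have shifted := abs_integral_sub_integral_le_of_nonneg_of_le (M := 2 * K) (hf.add_const K)
    (by positivity) (fun a => by linarith [neg_abs_le (f a), hK a])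
    (fun a => by linarith [le_abs_self (f a), hK a]) hμν
  have hfi (ρ : Measure α) [IsProbabilityMeasure ρ] : Integrable f ρ :=
    .of_bound hf.aestronglyMeasurable K (ae_of_all _ hK)
  simpa [integral_add (hfi μ) (integrable_const K), integral_add (hfi ν) (integrable_const K)]
    using shifted

lemma integral_le_of_forall_abs_le {α : Type*} [MeasurableSpace α] {μ : Measure α}
    [IsProbabilityMeasure μ] {f : α → ℝ} {K : ℝ} (hK : ∀ a, |f a| ≤ K) : ∫ a, f a ∂μ ≤ K := by
  have := norm_integral_le_of_norm_le_const (μ := μ) (f := f) (ae_of_all _ hK)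
  simp only [Real.norm_eq_abs, probReal_univ, mul_one] at this
  exact (le_abs_self _).trans this

/-- A pointwise Markov inequality: if `w < r` then `|w - c| ≥ r`. -/
lemma antitone_le_add_div_mul_abs_sub {h : ℝ → ℝ} (hh : Antitone h) (hh₀ : ∀ u, 0 ≤ h u)
    {w r c : ℝ} (hw : 0 ≤ w) (hr : 0 < r) (hrc : 2 * r ≤ c) :
    h w ≤ h r + h 0 / r * |w - c| := by
  have hw0 : h w ≤ h 0 := hh hw
  rcases le_or_gt r w with hrw | hwr
  · have : 0 ≤ h 0 / r * |w - c| := by have := hh₀ 0; positivity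
    linarith [hh hrw]
  · have : h 0 ≤ h 0 / r * |w - c| := by
      rw [div_mul_eq_mul_div, le_div_iff₀ hr]
      exact mul_le_mul_of_nonneg_left (by rw [abs_sub_comm, abs_of_pos (by linarith)]; linarith)
        (hh₀ 0)
    linarith [hh₀ r]

lemma integral_antitone_comp_le {Ω : Type*} [MeasurableSpace Ω] {μ : Measure Ω}
    [IsProbabilityMeasure μ] {h : ℝ → ℝ} (hh : Antitone h) (hh₀ : ∀ u, 0 ≤ h u) {W : Ω → ℝ}
    (hW : ∀ ω, 0 ≤ W ω) {r c : ℝ} (hr : 0 < r) (hrc : 2 * r ≤ c)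
    (hWc : Integrable (fun ω => W ω - c) μ) :
    ∫ ω, h (W ω) ∂μ ≤ h r + h 0 / r * ∫ ω, |W ω - c| ∂μ := by
  calc ∫ ω, h (W ω) ∂μ ≤ ∫ ω, (h r + h 0 / r * |W ω - c|) ∂μ :=
        integral_mono_of_nonneg (ae_of_all _ fun ω => hh₀ _)
          ((integrable_const _).add (hWc.abs.const_mul _))
          (ae_of_all _ fun ω => antitone_le_add_div_mul_abs_sub hh hh₀ (hW ω) hr hrc)
    _ = h r + h 0 / r * ∫ ω, |W ω - c| ∂μ := by
      rw [integral_add (integrable_const _) (hWc.abs.const_mul _), integral_const_mul]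
      simp

lemma sum_range_le_of_le_of_forall_ge_le {a : ℕ → ℝ} {A B : ℝ} {T t : ℕ} (hTt : T ≤ t)
    (hA : ∀ s, a s ≤ A) (hB : ∀ s, T ≤ s → a s ≤ B) :
    ∑ s ∈ Finset.range t, a s ≤ T * A + (t - T) * B := by
  rw [← Finset.sum_range_add_sum_Ico _ hTt]
  refine add_le_add ?_ ?_
  · exact (Finset.sum_le_card_nsmul _ _ _ fun s _ => hA s).trans_eq (by simp)
  · exact (Finset.sum_le_card_nsmul _ _ _ fun s hs => hB s (Finset.mem_Ico.1 hs).1).trans_eq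
      (by simp [Nat.cast_sub hTt])

lemma measurable_shift {S : Type*} [MeasurableSpace S] (n : ℕ) :
    Measurable fun (ω : ℕ → S) k => ω (n + k) :=
  measurable_pi_lambda _ fun _ => measurable_pi_apply _

namespace MarkovFamily

variable {S : Type*} [MeasurableSpace S] (F : MarkovFamily S)

instance isProbabilityMeasure_P (z : S) : IsProbabilityMeasure (F.P z) := F.prob z

def restart (n : ℕ) : Kernel (ℕ → S) (ℕ → S) where
  toFun ω := F.P (ω n)
  measurable' := F.meas.comp (measurable_pi_apply n)

@[simp]
lemma restart_apply (n : ℕ) (ω : ℕ → S) : F.restart n ω = F.P (ω n) := rfl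

lemma map_shift (z : S) (n : ℕ) :
    (F.P z).map (fun ω k => ω (n + k)) = F.restart n ∘ₘ F.P z := by
  ext A hA
  rw [Measure.map_apply (measurable_shift n) hA,
    Measure.bind_apply hA (F.restart n).aemeasurable]
  have := F.markov z n univ .univ A hA
  rw [univ_inter, Measure.restrict_univ] at this
  exact this

lemma ae_comp_start_eq {β : Type*} [MeasurableSpace β] [MeasurableSingletonClass β] {φ : S → β}
    (hφ : Measurable φ) (z : S) : ∀ᵐ ω ∂F.P z, φ (ω 0) = φ z := by
  have hmeas : MeasurableSet {ω : ℕ → S | φ (ω 0) = φ z} :=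
    (hφ.comp (measurable_pi_apply 0)) (measurableSet_singleton _)
  rw [ae_iff_measure_eq hmeas.nullMeasurableSet, measure_univ]
  exact le_antisymm prob_le_one
    ((F.start z).symm.le.trans (measure_mono fun ω (hω : ω 0 = z) => congrArg φ hω))

lemma lintegral_comp_shift (z : S) (n : ℕ) {g : (ℕ → S) → ℝ≥0∞} (hg : Measurable g) :
    ∫⁻ ω, g (fun k => ω (n + k)) ∂F.P z = ∫⁻ ω, ∫⁻ ω', g ω' ∂F.P (ω n) ∂F.P z := by
  rw [← lintegral_map hg (measurable_shift n), F.map_shift,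
    Measure.lintegral_bind (F.restart n).aemeasurable hg.aemeasurable]
  rfl

lemma integrable_bind_restart {g : (ℕ → S) → ℝ} (hg : Measurable g) {U : ℝ≥0∞}
    (hUtop : U ≠ ⊤) (hgU : ∀ w, ∫⁻ ω, ENNReal.ofReal |g ω| ∂F.P w ≤ U) (z : S) (n : ℕ) :
    Integrable g (F.restart n ∘ₘ F.P z) := by
  refine integrable_of_lintegral_ofReal_abs_le hg hUtop ?_
  rw [Measure.lintegral_bind (F.restart n).aemeasurable (by fun_prop)]
  calc _ ≤ ∫⁻ _, U ∂F.P z := lintegral_mono fun ω => hgU _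
    _ = U := by simp

lemma integral_comp_shift_le {g : (ℕ → S) → ℝ} (hg : Measurable g) {U : ℝ≥0∞}
    (hUtop : U ≠ ⊤) (hgU : ∀ w, ∫⁻ ω, ENNReal.ofReal |g ω| ∂F.P w ≤ U) {D : S → ℝ}
    (hgD : ∀ w, ∫ ω, g ω ∂F.P w ≤ D w) (z : S) (n : ℕ)
    (hD : Integrable (fun ω => D (ω n)) (F.P z)) :
    ∫ ω, g (fun k => ω (n + k)) ∂F.P z ≤ ∫ ω, D (ω n) ∂F.P z := by
  have hint := F.integrable_bind_restart hg hUtop hgU z n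
  rw [← integral_map (measurable_shift n).aemeasurable
    (by rw [F.map_shift]; exact hint.aestronglyMeasurable), F.map_shift,
    Measure.integral_bind hint]
  exact integral_mono hint.integral_bind hD fun ω => hgD _

def HasMeanAbsIncrementLE (φ : S → ℝ) (U : ℝ≥0∞) : Prop :=
  ∀ z, ∫⁻ ω, ENNReal.ofReal |φ (ω 1) - φ z| ∂F.P z ≤ U

section Increments

variable {F} {φ : S → ℝ} {U : ℝ≥0∞}

lemma lintegral_abs_increment_le (hφ : Measurable φ) (hU : F.HasMeanAbsIncrementLE φ U)
    (z : S) (n : ℕ) :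
    ∫⁻ ω, ENNReal.ofReal |φ (ω (n + 1)) - φ (ω n)| ∂F.P z ≤ U := by
  have hstep (w : S) : ∫⁻ ω, ENNReal.ofReal |φ (ω 1) - φ (ω 0)| ∂F.P w ≤ U :=
    (lintegral_congr_ae ((F.ae_comp_start_eq hφ w).mono fun ω hω => by rw [hω])).trans_le (hU w)
  calc _ = ∫⁻ ω, ∫⁻ ω', ENNReal.ofReal |φ (ω' 1) - φ (ω' 0)| ∂F.P (ω n) ∂F.P z :=
        F.lintegral_comp_shift z n (by fun_prop)
    _ ≤ ∫⁻ _, U ∂F.P z := lintegral_mono fun ω => hstep _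
    _ = U := by simp

lemma lintegral_abs_sub_start_le (hφ : Measurable φ) (hU : F.HasMeanAbsIncrementLE φ U)
    (z : S) (n : ℕ) :
    ∫⁻ ω, ENNReal.ofReal |φ (ω n) - φ z| ∂F.P z ≤ n * U := by
  induction n with
  | zero =>
    rw [lintegral_congr_ae ((F.ae_comp_start_eq hφ z).mono fun ω hω => by
      rw [hω, sub_self, abs_zero, ENNReal.ofReal_zero])]
    simp
  | succ n ih =>
    calc _ ≤ ∫⁻ ω, (ENNReal.ofReal |φ (ω (n + 1)) - φ (ω n)|
            + ENNReal.ofReal |φ (ω n) - φ z|) ∂F.P z :=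
          lintegral_mono fun ω =>
            (ENNReal.ofReal_le_ofReal (abs_sub_le _ _ _)).trans ENNReal.ofReal_add_le
      _ ≤ U + n * U := by
          rw [lintegral_add_left (by fun_prop)]
          exact add_le_add (lintegral_abs_increment_le hφ hU z n) ih
      _ = (n + 1 : ℕ) * U := by push_cast; ring

lemma integral_sub_start_eq_sum (hφ : Measurable φ) (hU : F.HasMeanAbsIncrementLE φ U)
    (hUtop : U ≠ ⊤) (z : S) (t : ℕ) :
    ∫ ω, (φ (ω t) - φ z) ∂F.P z =
      ∑ s ∈ Finset.range t, ∫ ω, (φ (ω (s + 1)) - φ (ω s)) ∂F.P z := by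
  rw [← integral_finsetSum _ fun s _ => integrable_of_lintegral_ofReal_abs_le (by fun_prop)
    hUtop (lintegral_abs_increment_le hφ hU z s)]
  refine integral_congr_ae ((F.ae_comp_start_eq hφ z).mono fun ω hω => ?_)
  simp only [Finset.sum_range_sub (fun s => φ (ω s)), hω]

lemma integrable_sub_start (hφ : Measurable φ) (hU : F.HasMeanAbsIncrementLE φ U)
    (hUtop : U ≠ ⊤) (z : S) (n : ℕ) : Integrable (fun ω => φ (ω n) - φ z) (F.P z) :=
  integrable_of_lintegral_ofReal_abs_le (by fun_prop)
    (ENNReal.mul_ne_top (ENNReal.natCast_ne_top n) hUtop) (lintegral_abs_sub_start_le hφ hU z n)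

lemma integral_abs_sub_start_le (hφ : Measurable φ) (hU : F.HasMeanAbsIncrementLE φ U)
    (hUtop : U ≠ ⊤) (z : S) (n : ℕ) :
    ∫ ω, |φ (ω n) - φ z| ∂F.P z ≤ n * U.toReal := by
  simpa using integral_abs_le_of_lintegral_ofReal_abs_le (by fun_prop)
    (ENNReal.mul_ne_top (ENNReal.natCast_ne_top n) hUtop) (lintegral_abs_sub_start_le hφ hU z n)

lemma integral_increment_le (hφ : Measurable φ) (hU : F.HasMeanAbsIncrementLE φ U)
    (hUtop : U ≠ ⊤) {D : S → ℝ} (hD : ∀ z, ∫ ω, (φ (ω 1) - φ z) ∂F.P z ≤ D z)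
    (z : S) (n : ℕ) (hDi : Integrable (fun ω => D (ω n)) (F.P z)) :
    ∫ ω, (φ (ω (n + 1)) - φ (ω n)) ∂F.P z ≤ ∫ ω, D (ω n) ∂F.P z := by
  refine F.integral_comp_shift_le (g := fun ω => φ (ω 1) - φ (ω 0)) (by fun_prop) hUtop
    (fun w => ?_) (fun w => ?_) z n hDi
  · exact (lintegral_congr_ae ((F.ae_comp_start_eq hφ w).mono fun ω hω => by
      simp only [hω])).trans_le (hU w)
  · exact (integral_congr_ae ((F.ae_comp_start_eq hφ w).mono fun ω hω => by
      simp only [hω])).trans_le (hD w)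

end Increments

lemma exists_forall_integral_comp_le {V : Set S} {π : Measure S} [IsProbabilityMeasure π]
    (hTV : ∀ δ : ℝ, 0 < δ → ∃ T : ℕ, ∀ t ≥ T, ∀ x ∈ V, ∀ B : Set S, MeasurableSet B →
      |(F.P x {ω | ω t ∈ B}).toReal - (π B).toReal| ≤ δ)
    {f : S → ℝ} (hf : Measurable f) {K : ℝ} (hK : ∀ x, |f x| ≤ K) {δ : ℝ} (hδ : 0 < δ) :
    ∃ T : ℕ, ∀ t ≥ T, ∀ x ∈ V, ∫ ω, f (ω t) ∂F.P x ≤ ∫ a, f a ∂π + δ := by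
  obtain ⟨T, hT⟩ := hTV (δ / (2 * |K| + 1)) (by positivity)
  refine ⟨T, fun t ht x hx => ?_⟩
  have := Measure.isProbabilityMeasure_map (μ := F.P x) (measurable_pi_apply t).aemeasurable
  have hclose := abs_integral_sub_integral_le_of_abs_le (μ := (F.P x).map (· t)) (ν := π) hf hK
    fun B hB => by
      rw [measureReal_def, measureReal_def, Measure.map_apply (measurable_pi_apply t) hB]
      exact hT t ht x hx B hB
  rw [integral_map (measurable_pi_apply t).aemeasurable hf.aestronglyMeasurable] at hclose
  have hsmall : 2 * K * (δ / (2 * |K| + 1)) ≤ δ := by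
    rw [← mul_div_assoc, div_le_iff₀ (by positivity)]
    nlinarith [le_abs_self K]
  linarith [(abs_le.1 hclose).2]

end MarkovFamily

section TwoComponentChain

variable {X Y : Type*} [MeasurableSpace X] [MeasurableSpace Y] {chain : MarkovFamily (X × Y)}
  {XC : MarkovFamily X} {π : Measure X} {L2 : Y → ℝ} {U : ℝ} {h : ℝ → ℝ} {f : X → ℝ} {ε : ℝ}

lemma integral_increment_le_of_condB
    (hA0 : ∀ x y, (chain.P (x, y)).map (fun ω n => (ω n).1) = XC.P x)
    (hB1 : CondB1 chain L2 U) (hB2 : CondB2 chain π L2 h f ε) {r : ℝ} (hr : 0 < r)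
    (x : X) {y : Y} (hy : 2 * r ≤ L2 y) (s : ℕ) :
    ∫ ω, (L2 (ω (s + 1)).2 - L2 (ω s).2) ∂chain.P (x, y)
      ≤ ∫ ω, f (ω s) ∂XC.P x + (h r + h 0 / r * (s * (ENNReal.ofReal U).toReal)) := by
  obtain ⟨hL2, hL2₀, hU⟩ := hB1
  obtain ⟨hh, hh₀, -, hf, ⟨K, hK⟩, -, -, hdrift⟩ := hB2
  have hφ : Measurable fun z : X × Y => L2 z.2 := hL2.comp measurable_snd
  have hU' (z : X × Y) :
      ∫⁻ ω, ENNReal.ofReal |L2 (ω 1).2 - L2 z.2| ∂chain.P z ≤ ENNReal.ofReal U := hU z.1 z.2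
  have hfs : Integrable (fun ω : ℕ → X × Y => f (ω s).1) (chain.P (x, y)) :=
    .of_bound (hf.comp (measurable_fst.comp (measurable_pi_apply s))).aestronglyMeasurable K
      (ae_of_all _ fun ω => hK _)
  have hhs : Integrable (fun ω : ℕ → X × Y => h (L2 (ω s).2)) (chain.P (x, y)) :=
    .of_bound (hh.measurable.comp (hφ.comp (measurable_pi_apply s))).aestronglyMeasurable (h 0)
      (ae_of_all _ fun ω => by rw [Real.norm_eq_abs, abs_of_nonneg (hh₀ _)]; exact hh (hL2₀ _))
  have hX : ∫ ω, f (ω s).1 ∂chain.P (x, y) = ∫ ω, f (ω s) ∂XC.P x := by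
    rw [← hA0 x y]
    exact (integral_map (f := fun ω : ℕ → X => f (ω s)) (measurable_pi_lambda _ fun n =>
      measurable_fst.comp (measurable_pi_apply n)).aemeasurable
      (hf.comp (measurable_pi_apply s)).aestronglyMeasurable).symm
  have hY : ∫ ω, h (L2 (ω s).2) ∂chain.P (x, y)
      ≤ h r + h 0 / r * (s * (ENNReal.ofReal U).toReal) := by
    refine (integral_antitone_comp_le hh hh₀ (fun ω => hL2₀ _) hr hy
      (chain.integrable_sub_start hφ hU' ENNReal.ofReal_ne_top (x, y) s)).trans ?_
    have := hh₀ 0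
    gcongr
    exact chain.integral_abs_sub_start_le hφ hU' ENNReal.ofReal_ne_top (x, y) s
  calc _ ≤ ∫ ω, (f (ω s).1 + h (L2 (ω s).2)) ∂chain.P (x, y) :=
        chain.integral_increment_le hφ hU' ENNReal.ofReal_ne_top (fun z => hdrift z.1 z.2)
          (x, y) s (hfs.add hhs)
    _ = ∫ ω, f (ω s).1 ∂chain.P (x, y) + ∫ ω, h (L2 (ω s).2) ∂chain.P (x, y) :=
        integral_add hfs hhs
    _ ≤ _ := by rw [hX]; gcongr

lemma integral_sub_le_sum_of_condB
    (hA0 : ∀ x y, (chain.P (x, y)).map (fun ω n => (ω n).1) = XC.P x)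
    (hB1 : CondB1 chain L2 U) (hB2 : CondB2 chain π L2 h f ε) {r : ℝ} (hr : 0 < r)
    (x : X) {y : Y} (hy : 2 * r ≤ L2 y) (t : ℕ) :
    ∫ ω, (L2 (ω t).2 - L2 y) ∂chain.P (x, y)
      ≤ ∑ s ∈ Finset.range t,
          (∫ ω, f (ω s) ∂XC.P x + (h r + h 0 / r * (t * (ENNReal.ofReal U).toReal))) := by
  rw [chain.integral_sub_start_eq_sum (φ := fun z => L2 z.2) (hB1.1.comp measurable_snd)
    (fun z => hB1.2.2 z.1 z.2) ENNReal.ofReal_ne_top (x, y) t]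
  refine Finset.sum_le_sum fun s hs =>
    (integral_increment_le_of_condB hA0 hB1 hB2 hr x hy s).trans ?_
  have := hB2.2.1 0
  gcongr
  exact_mod_cast (Finset.mem_range.1 hs).le

end TwoComponentChain

theorem lemma1_drift_after_t_steps_general
    {X Y : Type*} [MeasurableSpace X] [MeasurableSpace Y]
    (chain : MarkovFamily (X × Y)) (XC : MarkovFamily X) (V : Set X) (π : Measure X)
    (L2 : Y → ℝ) (U : ℝ) (h : ℝ → ℝ) (f : X → ℝ) (ε : ℝ)
    (hA : CondA chain XC V π)
    (hB1 : CondB1 chain L2 U)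
    (hB2 : CondB2 chain π L2 h f ε) :
    ∃ t0 : ℕ, 0 < t0 ∧ ∀ t : ℕ, t0 ≤ t → ∃ N0 : ℝ, 0 < N0 ∧
      ∀ x ∈ V, ∀ y : Y, N0 ≤ L2 y →
        ∫ ω, (L2 (ω t).2 - L2 y) ∂ chain.P (x, y) ≤ -(t : ℝ) * (ε / 10) := by
  obtain ⟨-, hA0, -, -, hπ, -, -, hTV, -⟩ := hA
  obtain ⟨-, -, hh, hf, ⟨K, hK⟩, hε, hfπ, -⟩ := id hB2
  set Δ := ε / 10 with hΔ
  obtain ⟨T, hT⟩ := XC.exists_forall_integral_comp_le hTV hf hK (δ := Δ) (by positivity)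
  obtain ⟨t0, ht0⟩ := eventually_atTop.1 ((eventually_ge_atTop T).and
    (tendsto_natCast_atTop_atTop.eventually_ge_atTop (T * (K + 9 * Δ) / (7 * Δ))))
  refine ⟨t0 + 1, t0.succ_pos, fun t ht => ?_⟩
  obtain ⟨hTt, ht_large⟩ := ht0 t (by omega)
  have hlim : Tendsto (fun r => h r + h 0 / r * (t * (ENNReal.ofReal U).toReal)) atTop
      (nhds 0) := by
    simpa using hh.add ((tendsto_const_nhds.div_atTop tendsto_id).mul_const _)
  obtain ⟨r, hr, hrΔ⟩ := ((eventually_gt_atTop 0).and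
    (hlim.eventually (ge_mem_nhds (by positivity : 0 < Δ)))).exists
  refine ⟨2 * r, by positivity, fun x hx y hy => ?_⟩
  calc _ ≤ ∑ s ∈ Finset.range t, (∫ ω, f (ω s) ∂XC.P x + Δ) :=
        (integral_sub_le_sum_of_condB hA0 hB1 hB2 hr x hy t).trans
          (Finset.sum_le_sum fun s _ => add_le_add_right hrΔ _)
    _ ≤ T * (K + Δ) + (t - T) * (-ε + 2 * Δ) :=
        sum_range_le_of_le_of_forall_ge_le hTt
          (fun s => by linarith [integral_le_of_forall_abs_le (μ := XC.P x) fun ω => hK (ω s)])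
          (fun s hs => by linarith [hT s hs x hx])
    _ ≤ -(t : ℝ) * Δ := by
        rw [div_le_iff₀ (by positivity)] at ht_large
        rw [show ε = 10 * Δ by linarith]
        linarith

/-- **Lemma 1** (Foss–Shneer–Tyurlikov). Under Conditions A and B (with drift bound `-ε` and
`Δ = ε/10`), there is a positive integer `t0` such that for every `t ≥ t0` there is `N0 > 0`
with: for every `x ∈ V` and every `y` with `L2 y ≥ N0`,
`E_{x,y}[L2(Y^t) - L2(y)] ≤ - t Δ`. -/
theorem lemma1_drift_after_t_steps
    {X Y : Type*} [MeasurableSpace X] [MeasurableSpace Y]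
    [MeasurableSpace.CountablyGenerated X] [MeasurableSpace.CountablyGenerated Y]
    (chain : MarkovFamily (X × Y)) (XC : MarkovFamily X) (V : Set X) (π : Measure X)
    (L2 : Y → ℝ) (U : ℝ) (h : ℝ → ℝ) (f : X → ℝ) (ε : ℝ)
    (hA : CondA chain XC V π)
    (hB1 : CondB1 chain L2 U)
    (hB2 : CondB2 chain π L2 h f ε) :
    ∃ t0 : ℕ, 0 < t0 ∧ ∀ t : ℕ, t0 ≤ t → ∃ N0 : ℝ, 0 < N0 ∧
      ∀ x ∈ V, ∀ y : Y, N0 ≤ L2 y →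
        ∫ ω, (L2 (ω t).2 - L2 y) ∂ chain.P (x, y) ≤ -(t : ℝ) * (ε / 10) :=
  lemma1_drift_after_t_steps_general chain XC V π L2 U h f ε hA hB1 hB2
end

section
/- In the ALOHA model with MAC-coordinator, couple the original green queues G with the dominating green queues G̃ by using the same driving sequences (ξ_i^t, η_i^t, α_i^t) and the same red queues R_i^t, where the dominating dynamics are: for i ≠ i(t), G̃_i^{t+1} = G̃_i^t + η_i^t − γ̃_i^t·∏_{j≠i, j≠i(t)}(1−α_j^t)·(1 − α_{i(t)}^t·1{R_{i(t)}^t = 0}), and for i = i(t), G̃_i^{t+1} = G̃_i^t + η_i^t − 1{R_i^t = 0}·γ̃_i^t·∏_{j≠i}(1−α_j^t), with γ̃_j^t = α_j^t·1{G̃_j^t > 0} (stations with empty green queues send interfering dummy packets with probability p). If G_i^1 = G̃_i^1 for all i = 1,…,M, then almost surely G_i^t ≤ G̃_i^t for all i and all t ≥ 1. -/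
open MeasureTheory ProbabilityTheory Filter Set
open scoped ENNReal

noncomputable section

/-- The driving randomness of the slotted-time ALOHA models with `M` stations:
per-station red arrivals `ξ t`, per-station green arrivals `η t` and transmission decisions
`α t` in each slot `t`.  The slots are i.i.d., within a slot the red arrivals, green arrivals
and decisions are mutually independent, the decisions are i.i.d. Bernoulli(`p`), and the
per-station arrivals are obtained from the totals (of means `lamR`, `lamG`) by independent
uniform routing (a multinomial split). -/
structure AlohaDrivers (M : ℕ) (p lamR lamG : ℝ)
    (Ω : Type*) [MeasurableSpace Ω] (μ : Measure Ω) where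
  ξ : ℕ → Ω → Fin M → ℕ
  η : ℕ → Ω → Fin M → ℕ
  α : ℕ → Ω → Fin M → Bool
  meas_ξ : ∀ t, Measurable (ξ t)
  meas_η : ∀ t, Measurable (η t)
  meas_α : ∀ t, Measurable (α t)
  /-- the driving variables of distinct slots are mutually independent -/
  indep : iIndepFun
    (fun t ω => (ξ t ω, η t ω, α t ω)) μ
  /-- the slots are identically distributed -/
  ident : ∀ t, Measure.map (fun ω => (ξ t ω, η t ω, α t ω)) μ
    = Measure.map (fun ω => (ξ 0 ω, η 0 ω, α 0 ω)) μ
  /-- within a slot, arrivals and decisions are mutually independent -/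
  slot_indep : ∀ t, Measure.map (fun ω => (ξ t ω, η t ω, α t ω)) μ
    = (Measure.map (ξ t) μ).prod ((Measure.map (η t) μ).prod (Measure.map (α t) μ))
  /-- the decisions are i.i.d. Bernoulli(p) across stations -/
  alpha_law : ∀ t (b : Fin M → Bool),
    μ {ω | α t ω = b} = ENNReal.ofReal (∏ i, if b i then p else 1 - p)
  /-- red messages are routed independently and uniformly among the stations -/
  red_routing : ∀ t (k : Fin M → ℕ),
    μ {ω | ξ t ω = k} = μ {ω | ∑ i, ξ t ω i = ∑ i, k i}
      * ENNReal.ofReal ((Nat.multinomial Finset.univ k : ℝ) * (1 / M) ^ (∑ i, k i))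
  /-- green messages are routed independently and uniformly among the stations -/
  green_routing : ∀ t (k : Fin M → ℕ),
    μ {ω | η t ω = k} = μ {ω | ∑ i, η t ω i = ∑ i, k i}
      * ENNReal.ofReal ((Nat.multinomial Finset.univ k : ℝ) * (1 / M) ^ (∑ i, k i))
  /-- the total red arrival rate is `lamR` -/
  red_mean : ∫⁻ ω, ((∑ i, ξ 0 ω i : ℕ) : ℝ≥0∞) ∂μ = ENNReal.ofReal lamR
  /-- the total green arrival rate is `lamG` -/
  green_mean : ∫⁻ ω, ((∑ i, η 0 ω i : ℕ) : ℝ≥0∞) ∂μ = ENNReal.ofReal lamG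

/-- The station scheduled to transmit a red message in slot `t` (round-robin schedule). -/
def sched (M : ℕ) [NeZero M] (t : ℕ) : Fin M :=
  ⟨t % M, Nat.mod_lt t (Nat.pos_of_ne_zero (NeZero.ne M))⟩

open Classical in
/-- The indicator that station `j` attempts a green transmission: it equals `1` iff the
decision variable is on and the green queue of `j` is nonempty. -/
def gammaInd {M : ℕ} (g : Fin M → ℕ) (a : Fin M → Bool) (j : Fin M) : ℕ :=
  if a j = true ∧ 0 < g j then 1 else 0

open Classical in
/-- In the model **with** MAC-coordinator: the indicator that station `i` successfully
transmits a green message in a slot whose scheduled station is `s`, given red queues `r`,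
green queues `g` and decisions `a`. -/
def greenSubC {M : ℕ} (s i : Fin M) (r g : Fin M → ℕ) (a : Fin M → Bool) : ℕ :=
  if i = s then
    (if r s = 0 then 1 else 0) * gammaInd g a s *
      ∏ j ∈ Finset.univ.erase s, (1 - gammaInd g a j)
  else
    gammaInd g a i * (∏ j ∈ (Finset.univ.erase i).erase s, (1 - gammaInd g a j)) *
      (1 - gammaInd g a s * (if r s = 0 then 1 else 0))

open Classical in
/-- The state process (red queues, green queues) of the ALOHA model **with**
MAC-coordinator, started from `init`. -/
def procC {M : ℕ} [NeZero M] {p lamR lamG : ℝ} {Ω : Type*} [MeasurableSpace Ω]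
    {μ : Measure Ω} (d : AlohaDrivers M p lamR lamG Ω μ)
    (init : (Fin M → ℕ) × (Fin M → ℕ)) : ℕ → Ω → (Fin M → ℕ) × (Fin M → ℕ)
  | 0, _ => init
  | t + 1, ω =>
    let st := procC d init t ω
    let s := sched M t
    (fun i => st.1 i + d.ξ t ω i - (if i = s ∧ 0 < st.1 i then 1 else 0),
     fun i => st.2 i + d.η t ω i - greenSubC s i st.1 st.2 (d.α t ω))

open Classical in
/-- The success indicator of the **dominating** system: stations with empty green queues also
send interfering dummy packets (with probability `p`), i.e. the interference terms use the raw
decisions `a j` instead of `γ̃ j`. -/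
def greenSubTilde {M : ℕ} (s i : Fin M) (r gt : Fin M → ℕ) (a : Fin M → Bool) : ℕ :=
  if i = s then
    (if r s = 0 then 1 else 0) * gammaInd gt a s *
      ∏ j ∈ Finset.univ.erase s, (1 - if a j then 1 else 0)
  else
    gammaInd gt a i * (∏ j ∈ (Finset.univ.erase i).erase s, (1 - if a j then 1 else 0)) *
      (1 - (if a s then 1 else 0) * (if r s = 0 then 1 else 0))

open Classical in
/-- The coupled process `(R, G, G̃)` of the ALOHA model with MAC-coordinator together with its
dominating system, driven by the same arrivals, decisions, and red queues. -/
def procDom {M : ℕ} [NeZero M] {p lamR lamG : ℝ} {Ω : Type*} [MeasurableSpace Ω]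
    {μ : Measure Ω} (d : AlohaDrivers M p lamR lamG Ω μ)
    (init : (Fin M → ℕ) × (Fin M → ℕ) × (Fin M → ℕ)) :
    ℕ → Ω → (Fin M → ℕ) × (Fin M → ℕ) × (Fin M → ℕ)
  | 0, _ => init
  | t + 1, ω =>
    let st := procDom d init t ω
    let s := sched M t
    (fun i => st.1 i + d.ξ t ω i - (if i = s ∧ 0 < st.1 i then 1 else 0),
     fun i => st.2.1 i + d.η t ω i - greenSubC s i st.1 st.2.1 (d.α t ω),
     fun i => st.2.2 i + d.η t ω i - greenSubTilde s i st.1 st.2.2 (d.α t ω))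

end

/-!
The comparison holds pathwise, by induction on `t`. Interference in the dominating system is
computed from the raw decisions `α_j ≥ γ_j`, so at a station where `G_i^t = G̃_i^t` the dominating
queue succeeds only if the original one does. Where `G_i^t < G̃_i^t`, the gap is at least one,
and the dominating queue loses at most one packet per slot.
-/

lemma add_tsub_le_add_tsub_of_le_of_le_one {x y a sx sy : ℕ} (hxy : x ≤ y) (hsy : sy ≤ 1)
    (heq : x = y → sy ≤ sx) : x + a - sx ≤ y + a - sy := by
  rcases hxy.eq_or_lt with h | h
  · have := heq h; omega
  · omega

lemma gammaInd_le_ite {M : ℕ} (g : Fin M → ℕ) (a : Fin M → Bool) (j : Fin M) :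
    gammaInd g a j ≤ if a j then 1 else 0 := by
  unfold gammaInd; split_ifs <;> simp_all

lemma gammaInd_le_one {M : ℕ} (g : Fin M → ℕ) (a : Fin M → Bool) (j : Fin M) :
    gammaInd g a j ≤ 1 :=
  (gammaInd_le_ite g a j).trans (by split_ifs <;> simp)

lemma greenSubTilde_le_greenSubC {M : ℕ} (s i : Fin M) (r g gt : Fin M → ℕ)
    (a : Fin M → Bool) (hi : g i = gt i) :
    greenSubTilde s i r gt a ≤ greenSubC s i r g a := by
  have hfac : ∀ j, (1 - if a j then 1 else 0) ≤ 1 - gammaInd g a j := fun j =>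
    Nat.sub_le_sub_left (gammaInd_le_ite g a j) 1
  have hgi : gammaInd gt a i = gammaInd g a i := by unfold gammaInd; rw [hi]
  unfold greenSubTilde greenSubC
  by_cases h : i = s
  · rw [if_pos h, if_pos h]
    subst h
    rw [hgi]
    exact Nat.mul_le_mul le_rfl (Finset.prod_le_prod' fun j _ => hfac j)
  · rw [if_neg h, if_neg h]
    refine Nat.mul_le_mul (Nat.mul_le_mul hgi.le (Finset.prod_le_prod' fun j _ => hfac j)) ?_
    exact Nat.sub_le_sub_left (Nat.mul_le_mul (gammaInd_le_ite g a s) le_rfl) 1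

lemma greenSubTilde_le_one {M : ℕ} (s i : Fin M) (r gt : Fin M → ℕ) (a : Fin M → Bool) :
    greenSubTilde s i r gt a ≤ 1 := by
  have hprod : ∀ T : Finset (Fin M), (∏ j ∈ T, (1 - if a j then 1 else 0)) ≤ 1 :=
    fun T => Finset.prod_le_one (fun _ _ => Nat.zero_le _) fun _ _ => Nat.sub_le _ _
  have hind : (if r s = 0 then 1 else 0) ≤ 1 := by split_ifs <;> simp
  unfold greenSubTilde
  by_cases h : i = s
  · rw [if_pos h]
    simpa using Nat.mul_le_mul (Nat.mul_le_mul hind (gammaInd_le_one gt a s)) (hprod _)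
  · rw [if_neg h]
    simpa using Nat.mul_le_mul (Nat.mul_le_mul (gammaInd_le_one gt a i) (hprod _))
      (Nat.sub_le 1 _)

lemma procDom_green_le_tilde {M : ℕ} [NeZero M] {p lamR lamG : ℝ} {Ω : Type*}
    [MeasurableSpace Ω] {μ : Measure Ω} (d : AlohaDrivers M p lamR lamG Ω μ)
    (init : (Fin M → ℕ) × (Fin M → ℕ) × (Fin M → ℕ)) (hinit : init.2.1 = init.2.2)
    (ω : Ω) (t : ℕ) (i : Fin M) :
    (procDom d init t ω).2.1 i ≤ (procDom d init t ω).2.2 i := by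
  induction t generalizing i with
  | zero => simp [procDom, hinit]
  | succ t ih =>
    exact add_tsub_le_add_tsub_of_le_of_le_one (ih i) (greenSubTilde_le_one _ _ _ _ _)
      (greenSubTilde_le_greenSubC _ _ _ _ _ _)

theorem aloha_domination_coupling_general
    {M : ℕ} [NeZero M] {p lamR lamG : ℝ}
    {Ω : Type*} [MeasurableSpace Ω] {μ : Measure Ω}
    (d : AlohaDrivers M p lamR lamG Ω μ)
    (init : (Fin M → ℕ) × (Fin M → ℕ) × (Fin M → ℕ))
    (hinit : init.2.1 = init.2.2) :
    ∀ᵐ ω ∂μ, ∀ (t : ℕ) (i : Fin M),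
      (procDom d init t ω).2.1 i ≤ (procDom d init t ω).2.2 i :=
  ae_of_all μ (procDom_green_le_tilde d init hinit)

/-- **The domination coupling** used in the proof of Theorem 3: if the original green queues
and the dominating green queues (of the system in which stations with empty green queues send
interfering dummy packets) start from the same state and are driven by the same arrivals,
decisions and red queues, then almost surely `G_i^t ≤ G̃_i^t` for all stations `i` and all
times `t`. -/
theorem aloha_domination_coupling
    {M : ℕ} [NeZero M] {p lamR lamG : ℝ} (hp0 : 0 < p) (hp1 : p < 1)
    {Ω : Type*} [MeasurableSpace Ω] {μ : Measure Ω} [IsProbabilityMeasure μ]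
    (d : AlohaDrivers M p lamR lamG Ω μ)
    (init : (Fin M → ℕ) × (Fin M → ℕ) × (Fin M → ℕ))
    (hinit : init.2.1 = init.2.2) :
    ∀ᵐ ω ∂μ, ∀ (t : ℕ) (i : Fin M),
      (procDom d init t ω).2.1 i ≤ (procDom d init t ω).2.2 i :=
  aloha_domination_coupling_general d init hinit
end

section
/- Let {W^t} be a time-homogeneous Markov chain on a measurable space (𝒮,ℬ), let L: 𝒮 → [0,∞) be measurable, and let D = {w ∈ 𝒮 : L(w) ≤ N} for some N > 0. Suppose there exists a measurable positive-integer-valued function T on 𝒮 such that sup_{w} T(w)/max(1, L(w)) < ∞, sup_{w∈D} E_w[L(W^{T(w)})] < ∞, and E_w[L(W^{T(w)})] − L(w) ≤ −c·T(w) for some constant c > 0 and all w ∉ D. Then D is positive recurrent for {W^t}: τ_D := min{t ≥ 1 : W^t ∈ D} is P_w-a.s. finite for every w ∈ 𝒮 and sup_{w∈D} E_w[τ_D] < ∞. -/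
open MeasureTheory ProbabilityTheory Filter Set
open scoped ENNReal

/-!
Sample the chain at the times `s₀ = T(W⁰)`, `s_{k+1} = s_k + T(W^{s_k})`, frozen as soon as the
sampled state lies in `D`. By the strong Markov property at `s_k`, the drift condition makes
`c s_k + V(W^{s_k}) 1[W^{s_k} ∉ D]` a supermartingale, so `c E_z s_k ≤ c T(z) + E_z V(W^{T(z)})`.
Since `T ≥ 1`, sampling times that stay bounded must freeze in `D`; hence `τ_D ≤ sup_k s_k`, and
monotone convergence gives `E_z τ_D ≤ T(z) + E_z V(W^{T(z)}) / c`. With `V = L` the right-hand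
side is finite, and bounded on `D` because `T` and `E_w L(W^{T(w)})` are.
-/

open scoped NNReal

noncomputable section

variable {S : Type*}

open Classical in
theorem hitTime_eq_iInf (V : Set S) (ω : ℕ → S) :
    hitTime V ω = ⨅ n : ℕ, if 1 ≤ n ∧ ω n ∈ V then (n : ℝ≥0∞) else ⊤ := by
  refine le_antisymm (le_iInf fun n => ?_) (le_sInf ?_)
  · split_ifs with h
    · exact sInf_le ⟨n, rfl, h⟩
    · exact le_top
  · rintro _ ⟨n, rfl, h⟩
    exact (iInf_le _ n).trans (by rw [if_pos h])

theorem hitTime_le {V : Set S} {ω : ℕ → S} {n : ℕ} (hn : 1 ≤ n) (hω : ω n ∈ V) :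
    hitTime V ω ≤ n :=
  sInf_le ⟨n, rfl, hn, hω⟩

open Classical in
def sampleStep (D : Set S) (T : S → ℕ) (m : ℕ) (w : S) : ℕ :=
  if w ∈ D then m else m + T w

def sampleTime (D : Set S) (T : S → ℕ) : ℕ → (ℕ → S) → ℕ
  | 0, ω => T (ω 0)
  | k + 1, ω => sampleStep D T (sampleTime D T k ω) (ω (sampleTime D T k ω))

section sampleTime

variable {D : Set S} {T : S → ℕ} {k : ℕ} {ω : ℕ → S}

theorem sampleTime_succ_of_mem (h : ω (sampleTime D T k ω) ∈ D) :
    sampleTime D T (k + 1) ω = sampleTime D T k ω := by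
  rw [sampleTime, sampleStep, if_pos h]

theorem sampleTime_succ_of_notMem (h : ω (sampleTime D T k ω) ∉ D) :
    sampleTime D T (k + 1) ω = sampleTime D T k ω + T (ω (sampleTime D T k ω)) := by
  rw [sampleTime, sampleStep, if_neg h]

theorem sampleTime_le_succ (k : ℕ) (ω : ℕ → S) :
    sampleTime D T k ω ≤ sampleTime D T (k + 1) ω := by
  by_cases h : ω (sampleTime D T k ω) ∈ D
  · rw [sampleTime_succ_of_mem h]
  · rw [sampleTime_succ_of_notMem h]
    exact Nat.le_add_right _ _

theorem monotone_sampleTime (ω : ℕ → S) : Monotone fun k => sampleTime D T k ω :=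
  monotone_nat_of_le_succ fun k => sampleTime_le_succ k ω

theorem one_le_sampleTime (hT : ∀ w, 1 ≤ T w) (k : ℕ) (ω : ℕ → S) : 1 ≤ sampleTime D T k ω :=
  (hT (ω 0)).trans (monotone_sampleTime ω k.zero_le)

theorem hitTime_le_iSup_sampleTime (hT : ∀ w, 1 ≤ T w) (ω : ℕ → S) :
    hitTime D ω ≤ ⨆ k, (sampleTime D T k ω : ℝ≥0∞) := by
  by_cases hhit : ∃ k, ω (sampleTime D T k ω) ∈ D
  · obtain ⟨k, hk⟩ := hhit
    exact (hitTime_le (one_le_sampleTime hT k ω) hk).trans (le_iSup_of_le k le_rfl)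
  · push Not at hhit
    have hgrow (k : ℕ) : k ≤ sampleTime D T k ω := by
      induction k with
      | zero => exact Nat.zero_le _
      | succ k ih =>
        rw [sampleTime_succ_of_notMem (hhit k)]
        exact Nat.add_le_add ih (hT _)
    have hsup : ⨆ k, (sampleTime D T k ω : ℝ≥0∞) = ⊤ :=
      top_le_iff.1 <| ENNReal.iSup_natCast ▸ iSup_mono fun k => Nat.cast_le.2 (hgrow k)
    exact hsup ▸ le_top

end sampleTime

variable [MeasurableSpace S]

theorem measurable_hitTime {V : Set S} (hV : MeasurableSet V) : Measurable (hitTime V) := by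
  classical
  rw [funext (hitTime_eq_iInf V)]
  exact Measurable.iInf fun n => Measurable.ite
    ((MeasurableSet.const (1 ≤ n)).inter (measurable_pi_apply n hV)) measurable_const
    measurable_const

theorem measurable_eval_comp {f : (ℕ → S) → ℕ} (hf : Measurable f) :
    Measurable fun ω : ℕ → S => ω (f ω) :=
  (measurable_from_prod_countable_right (f := fun p : ℕ × (ℕ → S) => p.2 p.1)
    fun n => measurable_pi_apply n).comp (hf.prodMk measurable_id)

/-- The σ-algebra of the path up to time `n`, as in `MarkovFamily.markov`. -/
abbrev pastUpTo (S : Type*) [MeasurableSpace S] (n : ℕ) : MeasurableSpace (ℕ → S) :=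
  MeasurableSpace.comap (fun (ω : ℕ → S) (i : Fin (n+1)) => ω i) inferInstance

theorem pastUpTo_le (n : ℕ) : pastUpTo S n ≤ (inferInstance : MeasurableSpace (ℕ → S)) :=
  (measurable_pi_lambda (fun (ω : ℕ → S) (i : Fin (n+1)) => ω i)
    fun i => measurable_pi_apply (i : ℕ)).comap_le

theorem pastUpTo_mono {m n : ℕ} (h : m ≤ n) : pastUpTo S m ≤ pastUpTo S n := by
  rintro _ ⟨t, ht, rfl⟩
  exact ⟨(fun x : Fin (n+1) → S => fun i : Fin (m+1) => x (Fin.castLE (by omega) i)) ⁻¹' t,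
    (measurable_pi_lambda _ fun i => measurable_pi_apply _) ht, rfl⟩

theorem measurableSet_pastUpTo_eval_mem {m n : ℕ} (h : m ≤ n) {B : Set S}
    (hB : MeasurableSet B) : MeasurableSet[pastUpTo S n] {ω : ℕ → S | ω m ∈ B} :=
  ⟨(fun x : Fin (n+1) → S => x ⟨m, Nat.lt_succ_of_le h⟩) ⁻¹' B, measurable_pi_apply _ hB, rfl⟩

section sampleTime

variable {D : Set S} {T : S → ℕ}

theorem measurableSet_pastUpTo_sampleTime_eq (hD : MeasurableSet D) (hT : Measurable T)
    (k n : ℕ) : MeasurableSet[pastUpTo S n] {ω | sampleTime D T k ω = n} := by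
  induction k generalizing n with
  | zero => exact measurableSet_pastUpTo_eval_mem n.zero_le (hT (measurableSet_singleton n))
  | succ k ih =>
    have hdecomp : {ω | sampleTime D T (k + 1) ω = n} = ⋃ m ≤ n,
        {ω | sampleTime D T k ω = m} ∩ {ω | ω m ∈ sampleStep D T m ⁻¹' {n}} := by
      ext ω
      simp only [Set.mem_iUnion, Set.mem_inter_iff, Set.mem_ofPred_eq, Set.mem_preimage,
        Set.mem_singleton_iff, exists_prop]
      constructor
      · intro h
        exact ⟨_, h ▸ sampleTime_le_succ k ω, rfl, h⟩
      · rintro ⟨m, -, rfl, h⟩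
        exact h
    have hstep (m : ℕ) : Measurable (sampleStep D T m) :=
      Measurable.ite hD measurable_const (measurable_const.add hT)
    rw [hdecomp]
    exact .biUnion (Set.to_countable _) fun m hmn => (pastUpTo_mono hmn _ (ih m)).inter
      (measurableSet_pastUpTo_eval_mem hmn (hstep m (measurableSet_singleton n)))

theorem measurable_sampleTime (hD : MeasurableSet D) (hT : Measurable T) (k : ℕ) :
    Measurable (sampleTime D T k) :=
  measurable_to_countable' fun n => pastUpTo_le n _ (measurableSet_pastUpTo_sampleTime_eq hD hT k n)

end sampleTime

namespace MarkovFamily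

variable (F : MarkovFamily S)

theorem ae_eval_zero_mem {A : Set S} (hA : MeasurableSet A) {w : S} (hw : w ∈ A) :
    ∀ᵐ η ∂F.P w, η 0 ∈ A := by
  have := F.prob w
  have hone : F.P w {η | η 0 ∈ A} = 1 :=
    le_antisymm prob_le_one <|
      F.start w ▸ measure_mono fun η (hη : η 0 = w) => show η 0 ∈ A from hη ▸ hw
  exact ae_iff.2 ((prob_compl_eq_zero_iff (measurable_pi_apply 0 hA)).2 hone)

theorem setLIntegral_comp_shift (z : S) (n : ℕ) {B : Set (ℕ → S)}
    (hB : MeasurableSet[pastUpTo S n] B) {g : (ℕ → S) → ℝ≥0∞} (hg : Measurable g) :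
    ∫⁻ ω in B, g (fun k => ω (n + k)) ∂F.P z = ∫⁻ ω in B, ∫⁻ η, g η ∂F.P (ω n) ∂F.P z := by
  have hshift : Measurable fun (ω : ℕ → S) k => ω (n + k) :=
    measurable_pi_lambda _ fun k => measurable_pi_apply _
  have hlaw : ((F.P z).restrict B).map (fun ω k => ω (n + k))
      = (((F.P z).restrict B).map (fun ω => ω n)).bind F.P := by
    ext A hA
    rw [Measure.map_apply hshift hA, Measure.restrict_apply (hshift hA), Set.inter_comm,
      Measure.bind_apply hA F.meas.aemeasurable,
      lintegral_map (show Measurable fun x => F.P x A from (Measure.measurable_coe hA).comp F.meas)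
        (measurable_pi_apply n)]
    exact F.markov z n B hB A hA
  rw [← lintegral_map hg hshift, hlaw, Measure.lintegral_bind F.meas.aemeasurable hg.aemeasurable,
    lintegral_map (show Measurable fun x => ∫⁻ η, g η ∂F.P x from
      (Measure.measurable_lintegral hg).comp F.meas) (measurable_pi_apply n)]

/-- The strong Markov property at a random time `σ`, for events `A` known at time `σ`. -/
theorem setLIntegral_comp_shift_stopping (z : S) {σ : (ℕ → S) → ℕ} {A : Set (ℕ → S)}
    (hA : ∀ n, MeasurableSet[pastUpTo S n] (A ∩ {ω | σ ω = n}))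
    {g : (ℕ → S) → ℝ≥0∞} (hg : Measurable g) :
    ∫⁻ ω in A, g (fun k => ω (σ ω + k)) ∂F.P z
      = ∫⁻ ω in A, ∫⁻ η, g η ∂F.P (ω (σ ω)) ∂F.P z := by
  have hmeas (n : ℕ) : MeasurableSet (A ∩ {ω | σ ω = n}) := pastUpTo_le n _ (hA n)
  have hdisj : Pairwise (Function.onFun Disjoint fun n => A ∩ {ω | σ ω = n}) := fun m n hmn =>
    Set.disjoint_left.2 fun ω hm hn => hmn (hm.2.symm.trans hn.2)
  have hA_eq : A = ⋃ n, A ∩ {ω | σ ω = n} := by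
    ext ω
    simp
  rw [hA_eq, lintegral_iUnion hmeas hdisj, lintegral_iUnion hmeas hdisj]
  refine tsum_congr fun n => ?_
  calc ∫⁻ ω in A ∩ {ω | σ ω = n}, g (fun k => ω (σ ω + k)) ∂F.P z
      = ∫⁻ ω in A ∩ {ω | σ ω = n}, g (fun k => ω (n + k)) ∂F.P z :=
        setLIntegral_congr_fun (hmeas n) fun ω hω => by rw [hω.2]
    _ = ∫⁻ ω in A ∩ {ω | σ ω = n}, ∫⁻ η, g η ∂F.P (ω n) ∂F.P z :=
        F.setLIntegral_comp_shift z n (hA n) hg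
    _ = ∫⁻ ω in A ∩ {ω | σ ω = n}, ∫⁻ η, g η ∂F.P (ω (σ ω)) ∂F.P z :=
        setLIntegral_congr_fun (hmeas n) fun ω hω => by rw [hω.2]

theorem setLIntegral_comp_eval_add_step (z : S) {σ : (ℕ → S) → ℕ} {A : Set (ℕ → S)}
    (hA : ∀ n, MeasurableSet[pastUpTo S n] (A ∩ {ω | σ ω = n}))
    {V : S → ℝ≥0∞} (hV : Measurable V) {T : S → ℕ} (hT : Measurable T) :
    ∫⁻ ω in A, V (ω (σ ω + T (ω (σ ω)))) ∂F.P z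
      = ∫⁻ ω in A, ∫⁻ η, V (η (T (ω (σ ω)))) ∂F.P (ω (σ ω)) ∂F.P z := by
  have hg : Measurable fun η : ℕ → S => V (η (T (η 0))) :=
    hV.comp (measurable_eval_comp (hT.comp (measurable_pi_apply 0)))
  refine (F.setLIntegral_comp_shift_stopping z hA hg).trans <|
    lintegral_congr fun ω => lintegral_congr_ae ?_
  filter_upwards [F.ae_eval_zero_mem (hT (measurableSet_singleton (T (ω (σ ω))))) rfl]
    with η hη
  rw [Set.mem_preimage, Set.mem_singleton_iff] at hη
  rw [hη]

end MarkovFamily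

def sampledLyapunov (D : Set S) (V : S → ℝ≥0∞) (T : S → ℕ) (c : ℝ≥0) (k : ℕ) (ω : ℕ → S) :
    ℝ≥0∞ :=
  c * sampleTime D T k ω + Dᶜ.indicator V (ω (sampleTime D T k ω))

section Foster

variable (F : MarkovFamily S) {D : Set S} {V : S → ℝ≥0∞} {T : S → ℕ} {c : ℝ≥0}

theorem setLIntegral_sampledLyapunov_succ_le_of_notMem (hD : MeasurableSet D)
    (hV : Measurable V) (hT : Measurable T)
    (hdrift : ∀ w ∉ D, c * T w + ∫⁻ η, V (η (T w)) ∂F.P w ≤ V w) (z : S) (k : ℕ) :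
    ∫⁻ ω in {ω | ω (sampleTime D T k ω) ∉ D}, sampledLyapunov D V T c (k + 1) ω ∂F.P z
      ≤ ∫⁻ ω in {ω | ω (sampleTime D T k ω) ∉ D}, sampledLyapunov D V T c k ω ∂F.P z := by
  set s := sampleTime D T k
  set A := {ω : ℕ → S | ω (s ω) ∉ D}
  have hs : Measurable s := measurable_sampleTime hD hT k
  have hA : MeasurableSet A := measurable_eval_comp hs hD.compl
  have hA_past (n : ℕ) : MeasurableSet[pastUpTo S n] (A ∩ {ω | s ω = n}) := by
    have hA_eq : A ∩ {ω | s ω = n} = {ω | s ω = n} ∩ {ω | ω n ∈ Dᶜ} := by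
      ext ω
      constructor <;> rintro ⟨h₁, h₂⟩ <;> simp_all [A]
    rw [hA_eq]
    exact (measurableSet_pastUpTo_sampleTime_eq hD hT k n).inter
      (measurableSet_pastUpTo_eval_mem le_rfl hD.compl)
  set a : (ℕ → S) → ℝ≥0∞ := fun ω => c * s ω + c * T (ω (s ω))
  have ha : Measurable a := by
    have hcast : Measurable fun n : ℕ => (n : ℝ≥0∞) := measurable_from_top
    exact (measurable_const.mul (hcast.comp hs)).add
      (measurable_const.mul (hcast.comp (hT.comp (measurable_eval_comp hs))))
  have hmove : ∀ ω ∈ A,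
      sampledLyapunov D V T c (k + 1) ω ≤ a ω + V (ω (s ω + T (ω (s ω)))) := fun ω hω => by
    rw [sampledLyapunov, sampleTime_succ_of_notMem hω, Nat.cast_add, mul_add]
    exact add_le_add le_rfl (indicator_le_self Dᶜ V _)
  have hdecrease : ∀ ω ∈ A,
      a ω + ∫⁻ η, V (η (T (ω (s ω)))) ∂F.P (ω (s ω)) ≤ sampledLyapunov D V T c k ω :=
    fun ω hω => by
      rw [sampledLyapunov, indicator_of_mem (show ω (s ω) ∈ Dᶜ from hω), add_assoc]
      exact add_le_add le_rfl (hdrift _ hω)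
  calc ∫⁻ ω in A, sampledLyapunov D V T c (k + 1) ω ∂F.P z
      ≤ ∫⁻ ω in A, a ω + V (ω (s ω + T (ω (s ω)))) ∂F.P z := setLIntegral_mono' hA hmove
    _ = ∫⁻ ω in A, a ω ∂F.P z + ∫⁻ ω in A, ∫⁻ η, V (η (T (ω (s ω)))) ∂F.P (ω (s ω)) ∂F.P z := by
      rw [lintegral_add_left ha, F.setLIntegral_comp_eval_add_step z hA_past hV hT]
    _ = ∫⁻ ω in A, a ω + ∫⁻ η, V (η (T (ω (s ω)))) ∂F.P (ω (s ω)) ∂F.P z :=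
      (lintegral_add_left ha _).symm
    _ ≤ ∫⁻ ω in A, sampledLyapunov D V T c k ω ∂F.P z := setLIntegral_mono' hA hdecrease

theorem lintegral_sampledLyapunov_succ_le (hD : MeasurableSet D) (hV : Measurable V)
    (hT : Measurable T) (hdrift : ∀ w ∉ D, c * T w + ∫⁻ η, V (η (T w)) ∂F.P w ≤ V w)
    (z : S) (k : ℕ) :
    ∫⁻ ω, sampledLyapunov D V T c (k + 1) ω ∂F.P z
      ≤ ∫⁻ ω, sampledLyapunov D V T c k ω ∂F.P z := by
  set A := {ω : ℕ → S | ω (sampleTime D T k ω) ∈ D}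
  have hA : MeasurableSet A := measurable_eval_comp (measurable_sampleTime hD hT k) hD
  have hstay : EqOn (sampledLyapunov D V T c (k + 1)) (sampledLyapunov D V T c k) A :=
    fun ω hω => by rw [sampledLyapunov, sampleTime_succ_of_mem hω, sampledLyapunov]
  rw [← lintegral_add_compl (sampledLyapunov D V T c (k + 1)) hA,
    ← lintegral_add_compl (sampledLyapunov D V T c k) hA]
  exact add_le_add (setLIntegral_congr_fun hA hstay).le
    (setLIntegral_sampledLyapunov_succ_le_of_notMem F hD hV hT hdrift z k)

theorem lintegral_sampledLyapunov_zero_le (hT : Measurable T) (z : S) :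
    ∫⁻ ω, sampledLyapunov D V T c 0 ω ∂F.P z ≤ c * T z + ∫⁻ η, V (η (T z)) ∂F.P z := by
  have := F.prob z
  calc ∫⁻ ω, sampledLyapunov D V T c 0 ω ∂F.P z ≤ ∫⁻ ω, c * T z + V (ω (T z)) ∂F.P z := by
        refine lintegral_mono_ae ?_
        filter_upwards [F.ae_eval_zero_mem (hT (measurableSet_singleton (T z))) rfl] with ω hω
        rw [Set.mem_preimage, Set.mem_singleton_iff] at hω
        rw [sampledLyapunov, sampleTime, hω]
        exact add_le_add le_rfl (indicator_le_self Dᶜ V _)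
    _ = c * T z + ∫⁻ η, V (η (T z)) ∂F.P z := by
        rw [lintegral_add_left measurable_const, lintegral_const, measure_univ, mul_one]

theorem mul_lintegral_sampleTime_le (hD : MeasurableSet D) (hV : Measurable V)
    (hT : Measurable T) (hdrift : ∀ w ∉ D, c * T w + ∫⁻ η, V (η (T w)) ∂F.P w ≤ V w)
    (z : S) (k : ℕ) :
    c * ∫⁻ ω, (sampleTime D T k ω : ℝ≥0∞) ∂F.P z ≤ c * T z + ∫⁻ η, V (η (T z)) ∂F.P z :=
  calc c * ∫⁻ ω, (sampleTime D T k ω : ℝ≥0∞) ∂F.P z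
      = ∫⁻ ω, c * (sampleTime D T k ω : ℝ≥0∞) ∂F.P z :=
        (lintegral_const_mul _ (measurable_from_top.comp (measurable_sampleTime hD hT k))).symm
    _ ≤ ∫⁻ ω, sampledLyapunov D V T c k ω ∂F.P z := lintegral_mono fun _ => le_self_add
    _ ≤ ∫⁻ ω, sampledLyapunov D V T c 0 ω ∂F.P z :=
        antitone_nat_of_succ_le (f := fun j => ∫⁻ ω, sampledLyapunov D V T c j ω ∂F.P z)
          (lintegral_sampledLyapunov_succ_le F hD hV hT hdrift z) k.zero_le
    _ ≤ c * T z + ∫⁻ η, V (η (T z)) ∂F.P z := lintegral_sampledLyapunov_zero_le F hT z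

theorem lintegral_hitTime_le (hD : MeasurableSet D) (hV : Measurable V) (hT : Measurable T)
    (hT1 : ∀ w, 1 ≤ T w) (hc : c ≠ 0)
    (hdrift : ∀ w ∉ D, c * T w + ∫⁻ η, V (η (T w)) ∂F.P w ≤ V w) (z : S) :
    ∫⁻ ω, hitTime D ω ∂F.P z ≤ T z + (c : ℝ≥0∞)⁻¹ * ∫⁻ η, V (η (T z)) ∂F.P z := by
  have hc₀ : (c : ℝ≥0∞) ≠ 0 := ENNReal.coe_ne_zero.2 hc
  calc ∫⁻ ω, hitTime D ω ∂F.P z ≤ ∫⁻ ω, ⨆ k, (sampleTime D T k ω : ℝ≥0∞) ∂F.P z :=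
        lintegral_mono (hitTime_le_iSup_sampleTime hT1)
    _ = ⨆ k, ∫⁻ ω, (sampleTime D T k ω : ℝ≥0∞) ∂F.P z :=
        lintegral_iSup (fun k => measurable_from_top.comp (measurable_sampleTime hD hT k))
          fun _ _ hjk ω => Nat.cast_le.2 (monotone_sampleTime ω hjk)
    _ ≤ T z + (c : ℝ≥0∞)⁻¹ * ∫⁻ η, V (η (T z)) ∂F.P z := iSup_le fun k => by
        rw [← ENNReal.inv_mul_cancel_left hc₀ ENNReal.coe_ne_top (b := T z), ← mul_add,
          ← ENNReal.mul_le_iff_le_inv hc₀ ENNReal.coe_ne_top]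
        exact mul_lintegral_sampleTime_le F hD hV hT hdrift z k

end Foster

end

theorem foster_state_dependent_steps_general
    {S : Type*} [MeasurableSpace S] (F : MarkovFamily S)
    (L : S → ℝ) (hLmeas : Measurable L) (hL0 : ∀ w, 0 ≤ L w)
    (N : ℝ)
    (T : S → ℕ) (hTmeas : Measurable T) (hT1 : ∀ w, 1 ≤ T w)
    (hTlin : ∃ C : ℝ, ∀ w, (T w : ℝ) ≤ C * max 1 (L w))
    (hint : ∀ w, Integrable (fun ω => L (ω (T w))) (F.P w))
    (hbdd : ∃ C : ℝ, ∀ w, L w ≤ N → ∫ ω, L (ω (T w)) ∂ F.P w ≤ C)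
    (c : ℝ) (hc : 0 < c)
    (hdrift : ∀ w, N < L w → ∫ ω, L (ω (T w)) ∂ F.P w - L w ≤ -c * (T w : ℝ)) :
    PosRec F {w : S | L w ≤ N} := by
  obtain ⟨Ct, hCt⟩ := hTlin
  obtain ⟨C0, hC0⟩ := hbdd
  have hD : MeasurableSet {w | L w ≤ N} := hLmeas measurableSet_Iic
  have hlint (w : S) : ∫⁻ η, ENNReal.ofReal (L (η (T w))) ∂F.P w
      = ENNReal.ofReal (∫ η, L (η (T w)) ∂F.P w) :=
    (ofReal_integral_eq_lintegral_ofReal (hint w) (ae_of_all _ fun _ => hL0 _)).symm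
  have hdrift' : ∀ w ∉ {w | L w ≤ N}, ENNReal.ofReal c * T w
      + ∫⁻ η, ENNReal.ofReal (L (η (T w))) ∂F.P w ≤ ENNReal.ofReal (L w) := fun w hw => by
    rw [hlint, ← ENNReal.ofReal_natCast, ← ENNReal.ofReal_mul hc.le,
      ← ENNReal.ofReal_add (by positivity) (integral_nonneg fun _ => hL0 _)]
    exact ENNReal.ofReal_le_ofReal (by linarith [hdrift w (not_le.1 hw)])
  have hfoster := lintegral_hitTime_le F (c := c.toNNReal) hD
    (ENNReal.measurable_ofReal.comp hLmeas) hTmeas hT1 (Real.toNNReal_pos.2 hc).ne' hdrift'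
  simp only [hlint, Function.comp_apply] at hfoster
  refine ⟨fun z => ?_, ENNReal.ofReal (|Ct| * max 1 N) + (c.toNNReal : ℝ≥0∞)⁻¹ * ENNReal.ofReal C0,
    by finiteness, fun z hz => (hfoster z).trans ?_⟩
  · have := F.prob z
    refine ((ae_iff_measure_eq (measurable_hitTime hD measurableSet_Iio).nullMeasurableSet).1
      (ae_lt_top (measurable_hitTime hD) (ne_top_of_le_ne_top ?_ (hfoster z)))).trans measure_univ
    finiteness
  · gcongr
    · rw [← ENNReal.ofReal_natCast]
      refine ENNReal.ofReal_le_ofReal ((hCt z).trans ?_)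
      gcongr
      exacts [le_abs_self Ct, hz]
    · exact hC0 z hz

/-- **Extension of the Foster criterion with state-dependent step sizes**
(Theorem 1 of Foss–Konstantopoulos, as used in the paper). If `L ≥ 0` is measurable,
`T : 𝒮 → ℕ` is measurable, positive, and grows at most linearly in `L`, the expectations
`E_w L(W^{T(w)})` are uniformly bounded on `D = {L ≤ N}`, and
`E_w L(W^{T(w)}) - L w ≤ -c T(w)` off `D`, then `D` is positive recurrent. -/
theorem foster_state_dependent_steps
    {S : Type*} [MeasurableSpace S] (F : MarkovFamily S)
    (L : S → ℝ) (hLmeas : Measurable L) (hL0 : ∀ w, 0 ≤ L w)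
    (N : ℝ) (hN : 0 < N)
    (T : S → ℕ) (hTmeas : Measurable T) (hT1 : ∀ w, 1 ≤ T w)
    (hTlin : ∃ C : ℝ, ∀ w, (T w : ℝ) ≤ C * max 1 (L w))
    (hint : ∀ w, Integrable (fun ω => L (ω (T w))) (F.P w))
    (hbdd : ∃ C : ℝ, ∀ w, L w ≤ N → ∫ ω, L (ω (T w)) ∂ F.P w ≤ C)
    (c : ℝ) (hc : 0 < c)
    (hdrift : ∀ w, N < L w → ∫ ω, L (ω (T w)) ∂ F.P w - L w ≤ -c * (T w : ℝ)) :
    PosRec F {w : S | L w ≤ N} :=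
  foster_state_dependent_steps_general F L hLmeas hL0 N T hTmeas hT1 hTlin hint hbdd c hc hdrift
end
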